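/- arXiv:1205.0968 — 4 statements merged into one kernel-verified Lean document; each statement's English description precedes it below -/
import Mathlib

section
/- Let λ₁ and λ₂ be probability distributions on a finite set X with KL-divergence D(λ₁‖λ₂) ≤ d for some d > 0 (logarithms base 2). Then for every subset S ⊆ X, λ₂(S) ≥ λ₁(S) / 2^(2 + 2/λ₁(S) + 2d/λ₁(S)). -/
/-!
Put `p = λ₁(S)` and `c = (2 + 2d) / p`. On the part of `S` where `λ₁ > 2^c λ₂` every summand
of the divergence is at least `c λ₁(x)`, while by `ln t ≥ 1 - 1/t` the summands over any set add
up to at least `-1/ln 2`. Hence that part has `λ₁`-mass at most `(d + 1/ln 2) / c ≤ 3p/4`, so the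
rest of `S`, where `λ₂ ≥ 2^(-c) λ₁`, has `λ₁`-mass at least `p/4`, and `λ₂(S) ≥ p / (4 · 2^c)`.
-/

open Finset Real

theorem sub_div_log_le_mul_logb {B a b : ℝ} (hB : 1 < B) (ha : 0 ≤ a) (hb : 0 ≤ b)
    (hab : 0 < a → 0 < b) : (a - b) / log B ≤ a * logb B (a / b) := by
  rw [logb, ← mul_div_assoc]
  refine div_le_div_of_nonneg_right ?_ (log_nonneg hB.le)
  rcases ha.eq_or_lt with rfl | ha
  · simpa using hb
  · have hb := hab ha
    calc a - b = a * (1 - (a / b)⁻¹) := by field_simp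
      _ ≤ a * log (a / b) := by gcongr; exact one_sub_inv_le_log_of_pos (by positivity)

theorem mul_le_mul_logb_of_mul_rpow_lt {B a b c : ℝ} (hB : 1 < B) (hb : 0 < b)
    (h : b * B ^ c < a) : c * a ≤ a * logb B (a / b) := by
  have ha : 0 < a := lt_of_le_of_lt (by positivity) h
  rw [mul_comm]
  gcongr
  refine ((lt_logb_iff_rpow_lt hB (by positivity)).2 ?_).le
  rwa [lt_div_iff₀ hb, mul_comm]

section KullbackLeibler

variable {X : Type*} {B : ℝ} {f g : X → ℝ}

theorem neg_sum_div_log_le_sum_mul_logb (hB : 1 < B) (hf : ∀ x, 0 ≤ f x) (hg : ∀ x, 0 ≤ g x)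
    (hfg : ∀ x, 0 < f x → 0 < g x) (s : Finset X) :
    -(∑ x ∈ s, g x) / log B ≤ ∑ x ∈ s, f x * logb B (f x / g x) :=
  calc -(∑ x ∈ s, g x) / log B
      ≤ (∑ x ∈ s, f x - ∑ x ∈ s, g x) / log B := by
        have := log_pos hB
        gcongr
        linarith [sum_nonneg fun x (_ : x ∈ s) ↦ hf x]
    _ = ∑ x ∈ s, (f x - g x) / log B := by rw [← sum_sub_distrib, sum_div]
    _ ≤ ∑ x ∈ s, f x * logb B (f x / g x) :=
        sum_le_sum fun x _ ↦ sub_div_log_le_mul_logb hB (hf x) (hg x) (hfg x)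

theorem sum_mul_logb_le_add_inv_log [Fintype X] (hB : 1 < B) (hf : ∀ x, 0 ≤ f x)
    (hg : ∀ x, 0 ≤ g x) (hg1 : ∑ x, g x ≤ 1) (hfg : ∀ x, 0 < f x → 0 < g x) (s : Finset X) :
    ∑ x ∈ s, f x * logb B (f x / g x) ≤ ∑ x, f x * logb B (f x / g x) + 1 / log B := by
  classical
  have hcompl := neg_sum_div_log_le_sum_mul_logb hB hf hg hfg sᶜ
  have hg_compl : ∑ x ∈ sᶜ, g x ≤ 1 :=
    (sum_le_sum_of_subset_of_nonneg (subset_univ _) fun x _ _ ↦ hg x).trans hg1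
  have := log_pos hB
  rw [← sum_add_sum_compl s]
  have : -1 / log B ≤ -(∑ x ∈ sᶜ, g x) / log B := by gcongr
  rw [neg_div] at this
  linarith

theorem mul_sum_filter_mul_rpow_lt_le [Fintype X] (hB : 1 < B) (hf : ∀ x, 0 ≤ f x)
    (hg : ∀ x, 0 ≤ g x) (hg1 : ∑ x, g x ≤ 1) (hfg : ∀ x, 0 < f x → 0 < g x) (c : ℝ)
    (s : Finset X) :
    c * ∑ x ∈ s with g x * B ^ c < f x, f x
      ≤ ∑ x, f x * logb B (f x / g x) + 1 / log B :=
  calc c * ∑ x ∈ s with g x * B ^ c < f x, f x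
      ≤ ∑ x ∈ s with g x * B ^ c < f x, f x * logb B (f x / g x) := by
        rw [mul_sum]
        refine sum_le_sum fun x hx ↦ ?_
        have hlt := (mem_filter.1 hx).2
        have hgx : 0 < g x := hfg x (lt_of_le_of_lt (mul_nonneg (hg x) (by positivity)) hlt)
        exact mul_le_mul_logb_of_mul_rpow_lt hB hgx hlt
    _ ≤ _ := sum_mul_logb_le_add_inv_log hB hf hg hg1 hfg _

theorem sum_filter_le_mul_sum {r : ℝ} (hr : 0 ≤ r) (hg : ∀ x, 0 ≤ g x) (s : Finset X) :
    ∑ x ∈ s with f x ≤ g x * r, f x ≤ r * ∑ x ∈ s, g x :=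
  calc ∑ x ∈ s with f x ≤ g x * r, f x
      ≤ ∑ x ∈ s with f x ≤ g x * r, g x * r := sum_le_sum fun x hx ↦ (mem_filter.1 hx).2
    _ = r * ∑ x ∈ s with f x ≤ g x * r, g x := by rw [← sum_mul, mul_comm]
    _ ≤ r * ∑ x ∈ s, g x := by
        gcongr
        · exact fun x _ _ ↦ hg x
        · exact filter_subset _ s

end KullbackLeibler

theorem substate_theorem_general {X : Type*} [Fintype X] (lam1 lam2 : X → ℝ) (d : ℝ)
    (h1nn : ∀ x, 0 ≤ lam1 x) (h2nn : ∀ x, 0 ≤ lam2 x)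
    (h2sum : ∑ x, lam2 x = 1)
    (habs : ∀ x, 0 < lam1 x → 0 < lam2 x)
    (hd : 0 < d)
    (hkl : ∑ x, lam1 x * Real.logb 2 (lam1 x / lam2 x) ≤ d) :
    ∀ S : Finset X,
      ∑ x ∈ S, lam2 x ≥
        (∑ x ∈ S, lam1 x) /
          (2 : ℝ) ^ (2 + 2 / ∑ x ∈ S, lam1 x + 2 * d / ∑ x ∈ S, lam1 x) := by
  intro S
  set p := ∑ x ∈ S, lam1 x
  have hp_nonneg : 0 ≤ p := sum_nonneg fun x _ ↦ h1nn x
  rcases hp_nonneg.eq_or_lt with hp | hp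
  · rw [← hp, zero_div]
    exact sum_nonneg fun x _ ↦ h2nn x
  set c := (2 + 2 * d) / p
  have hcp : c * p = 2 + 2 * d := div_mul_cancel₀ _ hp.ne'
  have hinv_log_two : 1 / log 2 ≤ 3 / 2 := by
    rw [div_le_div_iff₀ (log_pos one_lt_two) two_pos]
    linarith [log_two_gt_d9]
  have hbad : c * ∑ x ∈ S with lam2 x * 2 ^ c < lam1 x, lam1 x ≤ c * (3 * p / 4) := by
    linarith [mul_sum_filter_mul_rpow_lt_le one_lt_two h1nn h2nn h2sum.le habs c S]
  have hgood : p / 4 ≤ ∑ x ∈ S with lam1 x ≤ lam2 x * 2 ^ c, lam1 x := by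
    have hsplit := sum_filter_add_sum_filter_not S (fun x ↦ lam1 x ≤ lam2 x * 2 ^ c) lam1
    simp only [not_le] at hsplit
    linarith [le_of_mul_le_mul_left hbad (by positivity)]
  have hmass := sum_filter_le_mul_sum (f := lam1) (rpow_nonneg zero_le_two c) h2nn S
  rw [ge_iff_le, show 2 + 2 / p + 2 * d / p = 2 + c by ring, rpow_add two_pos,
    rpow_two, div_le_iff₀ (by positivity)]
  linarith

/-- The classical Substate Theorem (Jain–Radhakrishnan–Sen): if two probability
distributions on a finite set have KL-divergence (base 2) at most `d`, then for every
subset `S`, `λ₂(S) ≥ λ₁(S) / 2^(2 + 2/λ₁(S) + 2d/λ₁(S))`. -/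
theorem substate_theorem {X : Type*} [Fintype X] (lam1 lam2 : X → ℝ) (d : ℝ)
    (h1nn : ∀ x, 0 ≤ lam1 x) (h2nn : ∀ x, 0 ≤ lam2 x)
    (h1sum : ∑ x, lam1 x = 1) (h2sum : ∑ x, lam2 x = 1)
    (habs : ∀ x, 0 < lam1 x → 0 < lam2 x)
    (hd : 0 < d)
    (hkl : ∑ x, lam1 x * Real.logb 2 (lam1 x / lam2 x) ≤ d) :
    ∀ S : Finset X,
      ∑ x ∈ S, lam2 x ≥
        (∑ x ∈ S, lam1 x) /
          (2 : ℝ) ^ (2 + 2 / ∑ x ∈ S, lam1 x + 2 * d / ∑ x ∈ S, lam1 x) :=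
  substate_theorem_general lam1 lam2 d h1nn h2nn h2sum habs hd hkl
end

section
/- Let μ and ν be probability measures on a finite set, with ν(x) > 0 whenever μ(x) > 0, and let S be a subset with μ(S) ≥ 1/2. Then for every d, if D(μ‖ν) < d, then ν(S) > 2^(−7−4d); equivalently, D(μ‖ν) ≥ (−log₂ ν(S) − 7)/4. -/
open Finset Real

/-- `x log₂ x ≥ -1/(2 log 2)` for `x ≥ 0`. -/
lemma aux_xlogx (x : ℝ) (hx : 0 ≤ x) : -(1 / (2 * Real.log 2)) ≤ x * Real.logb 2 x := by
  have hl2 : (0:ℝ) < Real.log 2 := Real.log_pos (by norm_num)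
  rcases eq_or_lt_of_le hx with h | h
  · simp [← h]
    positivity
  · have hs : (0:ℝ) < Real.sqrt x := Real.sqrt_pos.2 h
    have hlog : Real.log (1 / Real.sqrt x) ≤ 1 / Real.sqrt x - 1 :=
      Real.log_le_sub_one_of_pos (by positivity)
    rw [Real.log_div one_ne_zero (ne_of_gt hs), Real.log_one] at hlog
    have h1 : 1 - 1 / Real.sqrt x ≤ Real.log (Real.sqrt x) := by linarith
    have h2 : Real.log x = 2 * Real.log (Real.sqrt x) := by
      have := Real.log_sqrt hx
      linarith
    have hx2 : x = Real.sqrt x * Real.sqrt x := (Real.mul_self_sqrt hx).symm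
    have hinv : Real.sqrt x * (1 / Real.sqrt x) = 1 := by field_simp
    have key : -(1/2) ≤ x * Real.log x := by
      have heq : x * Real.log x = 2 * (Real.sqrt x * Real.sqrt x) * Real.log (Real.sqrt x) := by
        rw [h2, ← hx2]; ring
      rw [heq]
      nlinarith [sq_nonneg (Real.sqrt x - 1/2),
        mul_le_mul_of_nonneg_left h1 (by positivity : (0:ℝ) ≤ 2 * (Real.sqrt x * Real.sqrt x))]
    have heq2 : x * Real.logb 2 x = (x * Real.log x) / Real.log 2 := by
      rw [Real.logb]; ring
    have heq3 : -(1 / (2 * Real.log 2)) = (-(1/2)) / Real.log 2 := by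
      field_simp
    rw [heq2, heq3]
    gcongr

/-- Log-sum inequality over a finset. -/
lemma aux_logsum {X : Type*} (T : Finset X) (mu nu : X → ℝ)
    (hmnn : ∀ x, 0 ≤ mu x) (hnnn : ∀ x, 0 ≤ nu x)
    (habs : ∀ x, 0 < mu x → 0 < nu x) :
    (∑ x ∈ T, mu x) * Real.logb 2 ((∑ x ∈ T, mu x) / (∑ x ∈ T, nu x)) ≤
      ∑ x ∈ T, mu x * Real.logb 2 (mu x / nu x) := by
  set A := ∑ x ∈ T, mu x with hA
  set B := ∑ x ∈ T, nu x with hB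
  have hBnn : 0 ≤ B := Finset.sum_nonneg fun x _ => hnnn x
  have hmu0 : ∀ x, nu x = 0 → mu x = 0 := fun x hx => by
    by_contra h
    have := habs x (lt_of_le_of_ne (hmnn x) (Ne.symm h))
    rw [hx] at this; exact lt_irrefl 0 this
  rcases eq_or_lt_of_le hBnn with hB0 | hBpos
  · -- B = 0 : everything vanishes
    have hnu0 : ∀ x ∈ T, nu x = 0 := by
      intro x hx
      have := Finset.sum_eq_zero_iff_of_nonneg (fun y _ => hnnn y) |>.1 hB0.symm
      exact this x hx
    have hmu0' : ∀ x ∈ T, mu x = 0 := fun x hx => hmu0 x (hnu0 x hx)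
    have hA0 : A = 0 := Finset.sum_eq_zero hmu0'
    rw [hA0, zero_mul]
    apply Finset.sum_nonneg
    intro x hx
    rw [hmu0' x hx, zero_mul]
  · -- B > 0 : Jensen with g t = t log₂ t , weights ν x / B
    set g : ℝ → ℝ := fun t => t * Real.logb 2 t with hg
    have hl2 : (0:ℝ) < Real.log 2 := Real.log_pos (by norm_num)
    have hgconv : ConvexOn ℝ (Set.Ici (0:ℝ)) g := by
      have h1 : ConvexOn ℝ (Set.Ici (0:ℝ)) fun t => t * Real.log t :=
        Real.convexOn_mul_log
      have h2 := h1.smul (le_of_lt (by positivity : (0:ℝ) < (Real.log 2)⁻¹))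
      have hgeq : g = fun x => (Real.log 2)⁻¹ • (x * Real.log x) := by
        rw [hg]
        funext t
        rw [Real.logb, smul_eq_mul]
        ring
      rw [hgeq]; exact h2
    have hw : ∀ x ∈ T, 0 ≤ nu x / B := fun x _ => div_nonneg (hnnn x) hBnn
    have hw1 : ∑ x ∈ T, nu x / B = 1 := by
      rw [← Finset.sum_div, ← hB, div_self (ne_of_gt hBpos)]
    have hmem : ∀ x ∈ T, mu x / nu x ∈ Set.Ici (0:ℝ) := fun x _ =>
      div_nonneg (hmnn x) (hnnn x)
    have hjensen := hgconv.map_sum_le hw hw1 hmem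
    have hsum1 : ∑ x ∈ T, (nu x / B) • (mu x / nu x) = A / B := by
      rw [hA, Finset.sum_div]
      apply Finset.sum_congr rfl
      intro x _
      rcases eq_or_lt_of_le (hnnn x) with h0 | h0
      · rw [smul_eq_mul, ← h0, hmu0 x h0.symm]; simp
      · rw [smul_eq_mul]
        field_simp
    have hsum2 : ∑ x ∈ T, (nu x / B) • g (mu x / nu x)
        = (∑ x ∈ T, mu x * Real.logb 2 (mu x / nu x)) / B := by
      rw [Finset.sum_div]
      apply Finset.sum_congr rfl
      intro x _
      rcases eq_or_lt_of_le (hnnn x) with h0 | h0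
      · rw [smul_eq_mul, ← h0, hmu0 x h0.symm]; simp
      · rw [smul_eq_mul, hg]
        simp only
        field_simp
    rw [hsum1, hsum2] at hjensen
    have : g (A / B) = (A * Real.logb 2 (A / B)) / B := by
      rw [hg]
      simp only
      ring
    rw [this] at hjensen
    exact (div_le_div_iff_of_pos_right hBpos).1 hjensen

/-- If `0 ≤ a`, `0 ≤ b ≤ 1` and `b` is positive whenever `a` is, then
`a log₂ (a/b) ≥ -1/(2 log 2)`. -/
lemma aux_term_lb (a b : ℝ) (ha : 0 ≤ a) (hb : 0 ≤ b) (hb1 : b ≤ 1)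
    (hab : 0 < a → 0 < b) : -(1 / (2 * Real.log 2)) ≤ a * Real.logb 2 (a / b) := by
  rcases eq_or_lt_of_le ha with h | h
  · rw [← h, zero_mul]
    have hl2 : (0:ℝ) < Real.log 2 := Real.log_pos (by norm_num)
    have : (0:ℝ) < 1 / (2 * Real.log 2) := by positivity
    linarith
  · have hbpos := hab h
    have h1 : Real.logb 2 a ≤ Real.logb 2 (a / b) := by
      rw [Real.logb_div (ne_of_gt h) (ne_of_gt hbpos)]
      have : Real.logb 2 b ≤ 0 := Real.logb_nonpos (by norm_num) hb hb1
      linarith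
    calc -(1 / (2 * Real.log 2)) ≤ a * Real.logb 2 a := aux_xlogx a ha
      _ ≤ a * Real.logb 2 (a / b) := mul_le_mul_of_nonneg_left h1 ha

/-- Instantiation of the Substate Theorem used in the paper: if `μ(S) ≥ 1/2` and the
KL-divergence (base 2) `D(μ‖ν) < d`, then `ν(S) > 2^(−7−4d)`. -/
theorem substate_instantiation {X : Type*} [Fintype X] (mu nu : X → ℝ) (d : ℝ)
    (hmnn : ∀ x, 0 ≤ mu x) (hnnn : ∀ x, 0 ≤ nu x)
    (hmsum : ∑ x, mu x = 1) (hnsum : ∑ x, nu x = 1)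
    (habs : ∀ x, 0 < mu x → 0 < nu x)
    (S : Finset X) (hS : (1 : ℝ) / 2 ≤ ∑ x ∈ S, mu x)
    (hkl : ∑ x, mu x * Real.logb 2 (mu x / nu x) < d) :
    ∑ x ∈ S, nu x > (2 : ℝ) ^ (-7 - 4 * d) := by
  classical
  have hl2 : (0:ℝ) < Real.log 2 := Real.log_pos (by norm_num)
  set c : ℝ := 1 / (2 * Real.log 2) with hcdef
  have hcpos : 0 < c := by positivity
  have hc : c ≤ 3/4 := by
    rw [hcdef, div_le_iff₀ (by positivity)]
    nlinarith [Real.log_two_gt_d9]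
  set A := ∑ x ∈ S, mu x with hA
  set B := ∑ x ∈ S, nu x with hB
  set A' := ∑ x ∈ Sᶜ, mu x with hA'
  set B' := ∑ x ∈ Sᶜ, nu x with hB'
  have hAA' : A + A' = 1 := by rw [hA, hA', Finset.sum_add_sum_compl, hmsum]
  have hBB' : B + B' = 1 := by rw [hB, hB', Finset.sum_add_sum_compl, hnsum]
  have hBnn : 0 ≤ B := Finset.sum_nonneg fun x _ => hnnn x
  have hB'nn : 0 ≤ B' := Finset.sum_nonneg fun x _ => hnnn x
  have hAnn : 0 ≤ A := le_trans (by norm_num) hS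
  have hA'nn : 0 ≤ A' := Finset.sum_nonneg fun x _ => hmnn x
  have hB1 : B ≤ 1 := by linarith
  have hB'1 : B' ≤ 1 := by linarith
  -- positivity transfer for sums
  have htrans : ∀ T : Finset X, 0 < ∑ x ∈ T, mu x → 0 < ∑ x ∈ T, nu x := by
    intro T hT
    rcases eq_or_lt_of_le (Finset.sum_nonneg fun x (_ : x ∈ T) => hnnn x) with h0 | h0
    · exfalso
      have hnu0 : ∀ x ∈ T, nu x = 0 :=
        (Finset.sum_eq_zero_iff_of_nonneg (fun y _ => hnnn y)).1 h0.symm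
      have hmu0 : ∀ x ∈ T, mu x = 0 := by
        intro x hx
        by_contra hne
        have := habs x (lt_of_le_of_ne (hmnn x) (Ne.symm hne))
        rw [hnu0 x hx] at this; exact lt_irrefl 0 this
      rw [Finset.sum_eq_zero hmu0] at hT; exact lt_irrefl 0 hT
    · exact h0
  -- the two-point lower bound on the divergence
  have hsplit : A * Real.logb 2 (A / B) + A' * Real.logb 2 (A' / B') ≤
      ∑ x, mu x * Real.logb 2 (mu x / nu x) := by
    rw [← Finset.sum_add_sum_compl S fun x => mu x * Real.logb 2 (mu x / nu x)]
    exact add_le_add (aux_logsum S mu nu hmnn hnnn habs)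
      (aux_logsum Sᶜ mu nu hmnn hnnn habs)
  have htS : 0 < A → 0 < B := htrans S
  have htS' : 0 < A' → 0 < B' := htrans Sᶜ
  have hterm' : -c ≤ A' * Real.logb 2 (A' / B') := aux_term_lb A' B' hA'nn hB'nn hB'1 htS'
  rcases le_or_gt (1/2 : ℝ) B with hBhalf | hBhalf
  · -- ν(S) ≥ 1/2 : enough to show that the right-hand side is < 1/2
    have htermS : -c ≤ A * Real.logb 2 (A / B) := aux_term_lb A B hAnn hBnn hB1 htS
    have hd : -(3/2) < d := by nlinarith
    have : (2:ℝ) ^ (-7 - 4 * d) < (2:ℝ) ^ (-1 : ℝ) := by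
      apply Real.rpow_lt_rpow_left_iff (by norm_num : (1:ℝ) < 2) |>.2
      linarith
    have h2 : (2:ℝ) ^ (-1 : ℝ) = 1/2 := by
      rw [Real.rpow_neg_one]; norm_num
    rw [h2] at this
    linarith
  · -- ν(S) < 1/2 ≤ μ(S)
    have hBpos : 0 < B := htS (by linarith)
    have hL0 : 0 ≤ Real.logb 2 (A / B) :=
      Real.logb_nonneg (by norm_num) ((one_le_div hBpos).2 (by linarith))
    have hAL : (1/2) * Real.logb 2 (A / B) ≤ A * Real.logb 2 (A / B) :=
      mul_le_mul_of_nonneg_right hS hL0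
    have hlogA : (-1 : ℝ) ≤ Real.logb 2 A := by
      have h12 : Real.logb 2 (1/2 : ℝ) ≤ Real.logb 2 A :=
        Real.logb_le_logb_of_le (by norm_num : (1:ℝ) < 2) (by norm_num) hS
      have : Real.logb 2 (1/2 : ℝ) = -1 := by
        rw [one_div, Real.logb_inv, Real.logb_self_eq_one] <;> norm_num
      linarith
    have hLsplit : Real.logb 2 (A / B) = Real.logb 2 A - Real.logb 2 B :=
      Real.logb_div (by linarith) (ne_of_gt hBpos)
    have hlogBle : Real.logb 2 B ≤ 0 := Real.logb_nonpos (by norm_num) hBnn hB1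
    have hkey : -7 - 4 * d < Real.logb 2 B := by
      have hDlb : (1/2) * (-1 - Real.logb 2 B) - c < d := by
        have : (1/2) * (Real.logb 2 A - Real.logb 2 B) ≤ A * Real.logb 2 (A / B) := by
          rw [hLsplit] at hAL ⊢; exact hAL
        nlinarith
      linarith
    calc (2:ℝ) ^ (-7 - 4 * d) < (2:ℝ) ^ Real.logb 2 B :=
          (Real.rpow_lt_rpow_left_iff (by norm_num : (1:ℝ) < 2)).2 hkey
      _ = B := Real.rpow_logb (by norm_num) (by norm_num) hBpos
end

section
/- Let X, Y be finite sets, ρ a probability distribution on X × Y, q₂ : Y → [0,1], ε ≥ 0, E ⊆ X × Y, and A ⊆ X satisfying: for all x ∈ A, Σ_{y:(x,y)∈E} q₂(y)ρ(x,y) ≤ 4ε Σ_y q₂(y)ρ(x,y). Define B = { y ∈ Y : Σ_{x∈A:(x,y)∈E} ρ(x,y) ≤ 16ε Σ_{x∈A} ρ(x,y) }. Then Σ_{x∈A} Σ_{y∈B} q₂(y)ρ(x,y) ≥ (3/4) Σ_{x∈A} Σ_{y∈Y} q₂(y)ρ(x,y). -/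
open scoped Classical

open Finset

/-- Claim `mass-B` of the paper: the columns in `B` carry at least a `3/4` fraction of
the `q₂`-weighted `ρ`-mass of the rows in `A`. -/
theorem column_mass {X Y : Type*} [Fintype X] [Fintype Y]
    (ρ : X × Y → ℝ) (q2 : Y → ℝ) (E : Finset (X × Y)) (A : Finset X) (ε : ℝ)
    (hε : 0 ≤ ε)
    (hρnn : ∀ p, 0 ≤ ρ p) (hρsum : ∑ p, ρ p = 1)
    (hq2 : ∀ y, q2 y ∈ Set.Icc (0 : ℝ) 1)
    (hA : ∀ x ∈ A,
      ∑ y ∈ Finset.univ.filter (fun y : Y => (x, y) ∈ E), q2 y * ρ (x, y) ≤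
        4 * ε * ∑ y, q2 y * ρ (x, y)) :
    ∑ x ∈ A, ∑ y ∈ Finset.univ.filter (fun y : Y =>
        ∑ x' ∈ A.filter (fun x' : X => (x', y) ∈ E), ρ (x', y) ≤
          16 * ε * ∑ x' ∈ A, ρ (x', y)),
      q2 y * ρ (x, y) ≥
    (3 / 4) * ∑ x ∈ A, ∑ y, q2 y * ρ (x, y) := by
  classical
  set P : Y → Prop := fun y =>
    ∑ x' ∈ A.filter (fun x' : X => (x', y) ∈ E), ρ (x', y) ≤
      16 * ε * ∑ x' ∈ A, ρ (x', y) with hP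
  set T := ∑ x ∈ A, ∑ y, q2 y * ρ (x, y) with hT
  have hTnn : 0 ≤ T :=
    Finset.sum_nonneg fun x _ => Finset.sum_nonneg fun y _ =>
      mul_nonneg (hq2 y).1 (hρnn _)
  have hswap : ∑ x ∈ A, ∑ y ∈ univ.filter (fun y => ¬ P y), q2 y * ρ (x, y)
      = ∑ y ∈ univ.filter (fun y => ¬ P y), q2 y * ∑ x ∈ A, ρ (x, y) := by
    rw [Finset.sum_comm]
    exact Finset.sum_congr rfl fun y _ => by rw [Finset.mul_sum]
  have key : ∑ x ∈ A, ∑ y ∈ univ.filter (fun y => ¬ P y), q2 y * ρ (x, y)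
      ≤ (1 / 4) * T := by
    rw [hswap]
    rcases eq_or_lt_of_le hε with hε0 | hεpos
    · -- ε = 0 case: every term is zero
      have hzero : ∀ y ∈ univ.filter (fun y => ¬ P y),
          q2 y * ∑ x ∈ A, ρ (x, y) = 0 := by
        intro y hy
        rw [Finset.mem_filter] at hy
        have hnP := hy.2
        rw [hP] at hnP
        have hRnn : 0 ≤ 16 * ε * ∑ x' ∈ A, ρ (x', y) :=
          mul_nonneg (by linarith) (Finset.sum_nonneg fun x _ => hρnn _)
        have hpos : 0 < ∑ x' ∈ A.filter (fun x' : X => (x', y) ∈ E), ρ (x', y) :=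
          lt_of_le_of_lt hRnn (not_le.mp hnP)
        obtain ⟨x0, hx0, hρpos⟩ :
            ∃ x0 ∈ A.filter (fun x' : X => (x', y) ∈ E), 0 < ρ (x0, y) := by
          by_contra h
          push_neg at h
          have : ∑ x' ∈ A.filter (fun x' : X => (x', y) ∈ E), ρ (x', y) ≤ 0 :=
            Finset.sum_nonpos fun x hx => h x hx
          linarith
        rw [Finset.mem_filter] at hx0
        have hAx0 := hA x0 hx0.1
        rw [← hε0] at hAx0
        simp only [mul_zero, zero_mul] at hAx0
        have hmem : y ∈ univ.filter (fun y : Y => (x0, y) ∈ E) := by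
          simp [hx0.2]
        have hterm : q2 y * ρ (x0, y) ≤ 0 := by
          have := Finset.single_le_sum
            (f := fun y : Y => q2 y * ρ (x0, y))
            (fun y _ => mul_nonneg (hq2 y).1 (hρnn _)) hmem
          exact le_trans this hAx0
        have hq0 : q2 y = 0 := by
          have hnn : 0 ≤ q2 y * ρ (x0, y) := mul_nonneg (hq2 y).1 (hρnn _)
          have : q2 y * ρ (x0, y) = 0 := le_antisymm hterm hnn
          rcases mul_eq_zero.mp this with h | h
          · exact h
          · linarith
        rw [hq0, zero_mul]
      rw [Finset.sum_eq_zero hzero]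
      linarith
    · -- ε > 0 case
      have h16 : (0 : ℝ) < 16 * ε := by linarith
      refine le_of_mul_le_mul_left ?_ h16
      calc 16 * ε * ∑ y ∈ univ.filter (fun y => ¬ P y), q2 y * ∑ x ∈ A, ρ (x, y)
          = ∑ y ∈ univ.filter (fun y => ¬ P y),
              q2 y * (16 * ε * ∑ x ∈ A, ρ (x, y)) := by
            rw [Finset.mul_sum]; exact Finset.sum_congr rfl fun y _ => by ring
        _ ≤ ∑ y ∈ univ.filter (fun y => ¬ P y),
              q2 y * ∑ x ∈ A.filter (fun x' : X => (x', y) ∈ E), ρ (x, y) := by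
            refine Finset.sum_le_sum fun y hy => ?_
            rw [Finset.mem_filter] at hy
            have hnP := hy.2
            rw [hP] at hnP
            exact mul_le_mul_of_nonneg_left (le_of_lt (not_le.mp hnP)) (hq2 y).1
        _ ≤ ∑ y, q2 y * ∑ x ∈ A.filter (fun x' : X => (x', y) ∈ E), ρ (x, y) := by
            refine Finset.sum_le_sum_of_subset_of_nonneg (Finset.filter_subset _ _)
              fun y _ _ => mul_nonneg (hq2 y).1
                (Finset.sum_nonneg fun x _ => hρnn _)
        _ = ∑ x ∈ A, ∑ y ∈ univ.filter (fun y : Y => (x, y) ∈ E),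
              q2 y * ρ (x, y) := by
            simp_rw [Finset.mul_sum, Finset.sum_filter]
            rw [Finset.sum_comm]
        _ ≤ ∑ x ∈ A, 4 * ε * ∑ y, q2 y * ρ (x, y) :=
            Finset.sum_le_sum hA
        _ = 4 * ε * T := by rw [hT, Finset.mul_sum]
        _ ≤ 16 * ε * ((1 / 4) * T) := by nlinarith
  have hdec : T = (∑ x ∈ A, ∑ y ∈ univ.filter P, q2 y * ρ (x, y))
      + ∑ x ∈ A, ∑ y ∈ univ.filter (fun y => ¬ P y), q2 y * ρ (x, y) := by
    rw [hT, ← Finset.sum_add_distrib]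
    exact Finset.sum_congr rfl fun x _ =>
      (Finset.sum_filter_add_sum_filter_not _ _ _).symm
  have : ∑ x ∈ A, ∑ y ∈ univ.filter P, q2 y * ρ (x, y) ≥ (3 / 4) * T := by
    linarith
  convert this using 3
end

section
/- For all sufficiently small δ > 0 and all sufficiently large n, with k = ⌈√δ · n⌉: for every set C ⊆ {−1,1}ⁿ with |C| ≥ 2^(n − δn − 1), there exist x₁, …, x_k ∈ C such that for every j ∈ {1,…,k}, the Euclidean norm of the orthogonal projection of x_j onto span{x₁,…,x_{j−1}} is at most 2·δ^(1/4)·√n. -/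
/-!
For a subspace `V` of dimension `d`, write `exp (‖P_V x‖² / 4)` as a Gaussian average: with
`g` a standard Gaussian vector in `V`, `exp (‖P_V x‖² / 4) = 𝔼_g exp ⟪g / √2, x⟫`. Summing over
the sign vectors `x` and using `cosh t ≤ exp (t² / 2)` coordinatewise bounds the sum by
`2ⁿ 𝔼_g exp (‖g‖² / 4) = 2ⁿ √2ᵈ`. By Markov's inequality, at most `2ⁿ √2ᵈ e^{-u}` sign vectors
have `‖P_V x‖ > 2√u`, which is fewer than `|C|` once `d < u = √δ n`. So `C` always contains a
vector with a small projection onto the span of the vectors chosen so far, and the sequence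
is built greedily.
-/

open Finset Real RealInnerProductSpace MeasureTheory ProbabilityTheory

theorem exists_fin_forall_image_Iio {α : Type*} {k : ℕ} (P : Set α → α → Prop)
    (h : ∀ m < k, ∀ x : Fin m → α, ∃ y, P (Set.range x) y) :
    ∃ x : Fin k → α, ∀ j, P (x '' Set.Iio j) (x j) := by
  suffices ∀ m ≤ k, ∃ x : Fin m → α, ∀ j, P (x '' Set.Iio j) (x j) from this k le_rfl
  intro m
  induction m with
  | zero => exact fun _ => ⟨Fin.elim0, fun j => j.elim0⟩
  | succ m ih =>
    intro hm
    obtain ⟨x, hx⟩ := ih (by omega)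
    obtain ⟨y, hy⟩ := h m (by omega) x
    refine ⟨Fin.snoc x y, Fin.lastCases ?_ fun j => ?_⟩
    · have : Set.Iio (Fin.last m) = Set.range Fin.castSucc := by
        ext i; simp [Fin.lt_def]
      rwa [this, ← Set.range_comp, Fin.snoc_comp_castSucc, Fin.snoc_last]
    · rw [← Fin.image_castSucc_Iio, Set.image_image, Fin.snoc_castSucc, ← Function.comp_def,
        Fin.snoc_comp_castSucc]
      exact hx j

theorem sum_piFinset_exp_sum_mul_le {ι : Type*} [Fintype ι] [DecidableEq ι] (w : ι → ℝ) :
    ∑ y ∈ Fintype.piFinset fun _ : ι => ({1, -1} : Finset ℝ), exp (∑ i, w i * y i)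
      ≤ 2 ^ Fintype.card ι * exp (∑ i, w i ^ 2 / 2) := by
  calc ∑ y ∈ Fintype.piFinset fun _ : ι => ({1, -1} : Finset ℝ), exp (∑ i, w i * y i)
      = ∏ i, ∑ s ∈ ({1, -1} : Finset ℝ), exp (w i * s) := by
        simp_rw [exp_sum, Finset.prod_univ_sum]
    _ = ∏ i, 2 * cosh (w i) := by
        refine Finset.prod_congr rfl fun i _ => ?_
        rw [Finset.sum_pair (by norm_num), cosh_eq]
        ring_nf
    _ ≤ ∏ i, 2 * exp (w i ^ 2 / 2) := by
        gcongr with i; exact cosh_le_exp_half_sq _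
    _ = 2 ^ Fintype.card ι * exp (∑ i, w i ^ 2 / 2) := by
        rw [Finset.prod_mul_distrib, Finset.prod_const, exp_sum, Finset.card_univ]

theorem sum_exp_inner_le_of_forall_eq_one_or_eq_neg_one {ι : Type*} [Fintype ι]
    {C : Finset (EuclideanSpace ℝ ι)} (hC : ∀ x ∈ C, ∀ i, x i = 1 ∨ x i = -1)
    (w : EuclideanSpace ℝ ι) :
    ∑ x ∈ C, exp ⟪w, x⟫ ≤ 2 ^ Fintype.card ι * exp (‖w‖ ^ 2 / 2) := by
  classical
  have hsub : C.image WithLp.ofLp ⊆ Fintype.piFinset fun _ : ι => ({1, -1} : Finset ℝ) := by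
    intro y hy
    obtain ⟨x, hx, rfl⟩ := Finset.mem_image.mp hy
    simpa [Fintype.mem_piFinset] using hC x hx
  calc ∑ x ∈ C, exp ⟪w, x⟫ = ∑ y ∈ C.image WithLp.ofLp, exp (∑ i, w i * y i) := by
        rw [Finset.sum_image fun x _ y _ h => WithLp.ofLp_injective 2 h]
        refine Finset.sum_congr rfl fun x _ => ?_
        simp [PiLp.inner_apply, mul_comm]
    _ ≤ _ := Finset.sum_le_sum_of_subset_of_nonneg hsub fun _ _ _ => (exp_pos _).le
    _ ≤ _ := sum_piFinset_exp_sum_mul_le _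
    _ = 2 ^ Fintype.card ι * exp (‖w‖ ^ 2 / 2) := by
        rw [EuclideanSpace.norm_sq_eq, Finset.sum_div]
        simp

theorem gaussianPDFReal_zero_one_mul_exp_mul_sq {a : ℝ} (t : ℝ) :
    gaussianPDFReal 0 1 t * exp (a * t ^ 2) = (√(2 * π))⁻¹ * exp (-(1 / 2 - a) * t ^ 2) := by
  rw [gaussianPDFReal, mul_assoc, ← exp_add]
  congr 2 <;> [simp; (push_cast; ring)]

theorem integrable_exp_mul_sq_gaussianReal {a : ℝ} (ha : a < 1 / 2) :
    Integrable (fun t => exp (a * t ^ 2)) (gaussianReal 0 1) := by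
  rw [gaussianReal_of_var_ne_zero 0 one_ne_zero, gaussianPDF_def,
    integrable_withDensity_iff_integrable_smul' (by fun_prop) (by simp)]
  simp_rw [ENNReal.toReal_ofReal (gaussianPDFReal_nonneg _ _ _), smul_eq_mul,
    gaussianPDFReal_zero_one_mul_exp_mul_sq]
  exact (integrable_exp_neg_mul_sq (by linarith)).const_mul _

theorem integral_exp_mul_sq_gaussianReal {a : ℝ} (ha : a < 1 / 2) :
    ∫ t, exp (a * t ^ 2) ∂gaussianReal 0 1 = (√(1 - 2 * a))⁻¹ := by
  rw [integral_gaussianReal_eq_integral_smul one_ne_zero]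
  simp_rw [smul_eq_mul, gaussianPDFReal_zero_one_mul_exp_mul_sq]
  rw [integral_const_mul, integral_gaussian, show π / (1 / 2 - a) = 2 * π / (1 - 2 * a) by
    field_simp, sqrt_div' _ (by linarith : 0 ≤ 1 - 2 * a)]
  field_simp

section GaussianPi

variable {ι : Type*} [Fintype ι]

theorem integrable_exp_sum_mul_pi_gaussianReal (c : ι → ℝ) :
    Integrable (fun t : ι → ℝ => exp (∑ i, c i * t i)) (Measure.pi fun _ => gaussianReal 0 1) := by
  simp_rw [exp_sum]
  exact Integrable.fintype_prod fun i => integrable_exp_mul_gaussianReal (c i)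

theorem integral_exp_sum_mul_pi_gaussianReal (c : ι → ℝ) :
    ∫ t, exp (∑ i, c i * t i) ∂(Measure.pi fun _ => gaussianReal 0 1) = exp (∑ i, c i ^ 2 / 2) := by
  simp_rw [exp_sum]
  rw [integral_fintype_prod_eq_prod fun i t => exp (c i * t)]
  refine Finset.prod_congr rfl fun i _ => ?_
  simpa [mgf] using congrFun (mgf_id_gaussianReal (μ := 0) (v := 1)) (c i)

local notation "γ" => Measure.pi fun _ => gaussianReal 0 1

theorem sum_exp_sum_sq_inner_div_four_le {E : Type*} [NormedAddCommGroup E]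
    [InnerProductSpace ℝ E] {S : Finset E} {A : ℝ}
    (hS : ∀ w, ∑ x ∈ S, exp ⟪w, x⟫ ≤ A * exp (‖w‖ ^ 2 / 2)) {v : ι → E} (hv : Orthonormal ℝ v) :
    ∑ x ∈ S, exp (∑ i, ⟪v i, x⟫ ^ 2 / 4) ≤ A * √2 ^ Fintype.card ι := by
  -- Gaussian linearization: `exp (c ^ 2 / 4) = 𝔼_{t ∼ γ} exp (c t / √2)` in each coordinate, so
  -- `exp (∑ i, ⟪v i, x⟫ ^ 2 / 4)` is the `γ`-average of `exp ⟪w t, x⟫`.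
  set w : (ι → ℝ) → E := fun t => ∑ i, (t i / √2) • v i
  have hw_inner (t : ι → ℝ) (x : E) : ⟪w t, x⟫ = ∑ i, ⟪v i, x⟫ / √2 * t i := by
    simp only [w, sum_inner, real_inner_smul_left]
    exact Finset.sum_congr rfl fun i _ => by ring
  have hw_norm (t : ι → ℝ) : exp (‖w t‖ ^ 2 / 2) = ∏ i, exp (1 / 4 * t i ^ 2) := by
    rw [← real_inner_self_eq_norm_sq, hv.inner_sum, ← exp_sum]
    congr 1
    simp only [conj_trivial, Finset.sum_div]
    refine Finset.sum_congr rfl fun i _ => ?_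
    field_simp
    rw [sq_sqrt zero_le_two]
    ring
  have hint (x : E) : Integrable (fun t => exp ⟪w t, x⟫) γ := by
    simpa only [hw_inner] using integrable_exp_sum_mul_pi_gaussianReal _
  calc ∑ x ∈ S, exp (∑ i, ⟪v i, x⟫ ^ 2 / 4)
      = ∑ x ∈ S, ∫ t, exp ⟪w t, x⟫ ∂γ := by
        refine Finset.sum_congr rfl fun x _ => ?_
        simp only [hw_inner, integral_exp_sum_mul_pi_gaussianReal, div_pow, sq_sqrt zero_le_two]
        ring_nf
    _ = ∫ t, ∑ x ∈ S, exp ⟪w t, x⟫ ∂γ := (integral_finsetSum _ fun x _ => hint x).symm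
    _ ≤ ∫ t, A * ∏ i, exp (1 / 4 * t i ^ 2) ∂γ := by
        refine integral_mono (integrable_finsetSum _ fun x _ => hint x)
          ((Integrable.fintype_prod fun _ => integrable_exp_mul_sq_gaussianReal ?_).const_mul A)
          fun t => (hS (w t)).trans_eq (by rw [hw_norm])
        norm_num
    _ = A * √2 ^ Fintype.card ι := by
        rw [integral_const_mul, integral_fintype_prod_eq_pow (fun t => exp (1 / 4 * t ^ 2)),
          integral_exp_mul_sq_gaussianReal (by norm_num)]
        norm_num

end GaussianPi

section Projection

variable {E : Type*} [NormedAddCommGroup E] [InnerProductSpace ℝ E]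

theorem norm_orthogonalProjectionOnto_sq_eq_sum {ι : Type*} [Fintype ι] (K : Submodule ℝ E)
    [K.HasOrthogonalProjection] (b : OrthonormalBasis ι ℝ K) (x : E) :
    ‖K.orthogonalProjectionOnto x‖ ^ 2 = ∑ i, ⟪(b i : E), x⟫ ^ 2 := by
  simp_rw [← b.sum_sq_inner_right, Submodule.inner_orthogonalProjectionOnto_eq_of_mem_left]

variable {S : Finset E} {A : ℝ} (K : Submodule ℝ E) [FiniteDimensional ℝ K]

theorem sum_exp_norm_orthogonalProjectionOnto_sq_div_four_le
    (hS : ∀ w, ∑ x ∈ S, exp ⟪w, x⟫ ≤ A * exp (‖w‖ ^ 2 / 2)) :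
    ∑ x ∈ S, exp (‖K.orthogonalProjectionOnto x‖ ^ 2 / 4) ≤ A * √2 ^ Module.finrank ℝ K := by
  let b := stdOrthonormalBasis ℝ K
  simpa only [norm_orthogonalProjectionOnto_sq_eq_sum K b, Finset.sum_div, Fintype.card_fin,
    Function.comp_apply, Submodule.coe_subtypeₗᵢ, Submodule.subtype_apply] using
    sum_exp_sum_sq_inner_div_four_le hS (b.orthonormal.comp_linearIsometry K.subtypeₗᵢ)

theorem exists_mem_norm_orthogonalProjectionOnto_le
    (hS : ∀ w, ∑ x ∈ S, exp ⟪w, x⟫ ≤ A * exp (‖w‖ ^ 2 / 2)) {R : ℝ} (hR : 0 ≤ R)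
    (h : A * √2 ^ Module.finrank ℝ K < #S * exp (R ^ 2 / 4)) :
    ∃ x ∈ S, ‖K.orthogonalProjectionOnto x‖ ≤ R := by
  by_contra! hlt
  refine h.not_ge ?_
  calc #S * exp (R ^ 2 / 4) = ∑ _ ∈ S, exp (R ^ 2 / 4) := by rw [sum_const, nsmul_eq_mul]
    _ ≤ ∑ x ∈ S, exp (‖K.orthogonalProjectionOnto x‖ ^ 2 / 4) := by
        gcongr with x hx
        exact (hlt x hx).le
    _ ≤ A * √2 ^ Module.finrank ℝ K := sum_exp_norm_orthogonalProjectionOnto_sq_div_four_le K hS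

end Projection

theorem two_pow_mul_sqrt_two_pow_lt_mul_exp {n d : ℕ} {a u c : ℝ} (hd : (d : ℝ) < u)
    (ha : 0 ≤ a) (hau : a + 1 ≤ u / 2) (hc : (2 : ℝ) ^ ((n : ℝ) - a - 1) ≤ c) :
    2 ^ n * √2 ^ d < c * exp u := by
  have hsplit : (2 : ℝ) ^ n * √2 ^ d = 2 ^ ((n : ℝ) - a - 1) * 2 ^ ((d : ℝ) / 2 + a + 1) := by
    rw [← rpow_add two_pos, sqrt_eq_rpow, ← rpow_natCast, ← rpow_natCast (2 ^ _), ← rpow_mul,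
      ← rpow_add two_pos]
    · ring_nf
    · norm_num
  have hexp : (2 : ℝ) ^ ((d : ℝ) / 2 + a + 1) < exp u := calc
    _ ≤ exp 1 ^ ((d : ℝ) / 2 + a + 1) :=
        rpow_le_rpow zero_le_two (by linarith [add_one_le_exp (1 : ℝ)]) (by positivity)
    _ = exp ((d : ℝ) / 2 + a + 1) := exp_one_rpow _
    _ < exp u := exp_lt_exp.2 (by linarith)
  rw [hsplit]
  calc (2 : ℝ) ^ ((n : ℝ) - a - 1) * 2 ^ ((d : ℝ) / 2 + a + 1)
      ≤ c * 2 ^ ((d : ℝ) / 2 + a + 1) := by gcongr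
    _ < c * exp u := by gcongr; exact (rpow_pos_of_pos two_pos _).trans_le hc

theorem exists_fin_near_orthogonal_of_forall_eq_one_or_eq_neg_one {ι : Type*} [Fintype ι]
    {C : Finset (EuclideanSpace ℝ ι)} (hC : ∀ x ∈ C, ∀ i, x i = 1 ∨ x i = -1) {a u : ℝ}
    (ha : 0 ≤ a) (hau : a + 1 ≤ u / 2) (hCcard : (2 : ℝ) ^ ((Fintype.card ι : ℝ) - a - 1) ≤ #C) :
    ∃ x : Fin ⌈u⌉₊ → EuclideanSpace ℝ ι, ∀ j, x j ∈ C ∧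
      ‖(Submodule.span ℝ (x '' Set.Iio j)).orthogonalProjectionOnto (x j)‖ ≤ 2 * √u := by
  refine exists_fin_forall_image_Iio
    (fun s y => y ∈ C ∧ ‖(Submodule.span ℝ s).orthogonalProjectionOnto y‖ ≤ 2 * √u)
    fun m hm x => ?_
  have hd : (Module.finrank ℝ (Submodule.span ℝ (Set.range x)) : ℝ) < u :=
    (Nat.cast_le.2 ((finrank_range_le_card x).trans_eq (Fintype.card_fin m))).trans_lt
      (Nat.lt_ceil.1 hm)
  refine exists_mem_norm_orthogonalProjectionOnto_le _
    (sum_exp_inner_le_of_forall_eq_one_or_eq_neg_one hC) (by positivity) ?_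
  rw [mul_pow, sq_sqrt (by linarith), show (2 : ℝ) ^ 2 * u / 4 = u by ring]
  simpa using two_pow_mul_sqrt_two_pow_lt_mul_exp hd ha hau hCcard

/-- Generalization of Sherstov's Lemma 3.1: for all sufficiently small `δ > 0` and
sufficiently large `n`, every set `C ⊆ {−1,1}ⁿ` of size at least `2^(n−δn−1)` contains
vectors `x₁, …, x_k`, `k = ⌈√δ·n⌉`, each of whose projections onto the span of the
previous ones has norm at most `2·δ^(1/4)·√n`. -/
theorem near_orthogonal_vectors :
    ∃ δ₀ : ℝ, 0 < δ₀ ∧ ∀ δ : ℝ, 0 < δ → δ ≤ δ₀ → ∃ N : ℕ, ∀ n : ℕ, N ≤ n →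
      ∀ C : Finset (EuclideanSpace ℝ (Fin n)),
        (∀ x ∈ C, ∀ i, x i = 1 ∨ x i = -1) →
        (2 : ℝ) ^ ((n : ℝ) - δ * n - 1) ≤ (C.card : ℝ) →
        ∃ x : Fin (⌈Real.sqrt δ * n⌉₊) → EuclideanSpace ℝ (Fin n),
          (∀ j, x j ∈ C) ∧
          ∀ j, ‖(Submodule.orthogonalProjection
              (Submodule.span ℝ (x '' {i | i < j})) (x j) : EuclideanSpace ℝ (Fin n))‖
            ≤ 2 * δ ^ ((1 : ℝ) / 4) * Real.sqrt n := by
  refine ⟨1 / 16, by norm_num, fun δ hδ hδ₀ => ⟨⌈4 / √δ⌉₊, fun n hn C hC hCcard => ?_⟩⟩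
  have hu : 4 ≤ √δ * n := by
    have := (Nat.le_ceil (4 / √δ)).trans (Nat.cast_le.2 hn)
    rwa [div_le_iff₀ (sqrt_pos.2 hδ), mul_comm] at this
  have hδn : δ * n ≤ √δ * n / 4 := by
    have : √δ ≤ 1 / 4 := by
      simpa [show (1 / 16 : ℝ) = (1 / 4) ^ 2 by norm_num] using sqrt_le_sqrt hδ₀
    calc δ * n = √δ * (√δ * n) := by rw [← mul_assoc, mul_self_sqrt hδ.le]
      _ ≤ √δ * n / 4 := by nlinarith
  have hR : 2 * √(√δ * n) = 2 * δ ^ ((1 : ℝ) / 4) * √n := by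
    rw [sqrt_mul (sqrt_nonneg δ), sqrt_eq_rpow, sqrt_eq_rpow, ← rpow_mul hδ.le]
    ring_nf
  obtain ⟨x, hx⟩ := exists_fin_near_orthogonal_of_forall_eq_one_or_eq_neg_one hC
    (a := δ * n) (u := √δ * n) (by positivity) (by linarith) (by simpa using hCcard)
  exact ⟨x, fun j => (hx j).1, fun j => hR ▸ (hx j).2⟩
end
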